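/- arXiv:1906.04094 — 4 statements merged into one kernel-verified Lean document; each statement's English description precedes it below -/
import Mathlib

section
/- Let S1 and S2 be sequences of length 2n over {1,...,n} in which each element appears exactly twice, and suppose S2 is obtained from S1 by swapping the entries at positions i and i+1, where the entries a and b at these positions are distinct. Then the interval graphs represented by S1 and S2 are equal if and only if the two swapped entries are both first occurrences (left endpoints) or both second occurrences (right endpoints). -/
/-- A string representation: a sequence of length `2 * n` over `Fin n` in which
each element appears exactly twice. -/
def IsStringRep {n : ℕ} (S : Fin (2 * n) → Fin n) : Prop :=
  ∀ x : Fin n, (Finset.univ.filter (fun i => S i = x)).card = 2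

/-- Position of the first occurrence of `x` in `S`. -/
noncomputable def firstOcc {n : ℕ} (S : Fin (2 * n) → Fin n) (x : Fin n) : ℕ :=
  sInf {i : ℕ | ∃ h : i < 2 * n, S ⟨i, h⟩ = x}

/-- Position of the second (last) occurrence of `x` in `S`. -/
noncomputable def secondOcc {n : ℕ} (S : Fin (2 * n) → Fin n) (x : Fin n) : ℕ :=
  sSup {i : ℕ | ∃ h : i < 2 * n, S ⟨i, h⟩ = x}

/-- The interval graph encoded by a string representation: vertex `x`
corresponds to the interval `[firstOcc S x, secondOcc S x]` and adjacency is
interval intersection. -/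
noncomputable def stringGraph {n : ℕ} (S : Fin (2 * n) → Fin n) : SimpleGraph (Fin n) :=
  SimpleGraph.fromRel fun i j =>
    firstOcc S i ≤ secondOcc S j ∧ firstOcc S j ≤ secondOcc S i

/-!
Swapping the entries at positions `i` and `i + 1` keeps the relative order of any two positions
other than this pair. Adjacency only compares first occurrences with second occurrences, and the
two kinds never share a position. So if both swapped entries are first occurrences, or both are
second ones, no comparison changes. Otherwise one of `a`, `b` ends at `i` and the other starts at
`i + 1`, or the reverse, and the swap moves the two intervals from overlapping to disjoint or back.
-/

theorem Nat.swap_succ_le_swap_succ_iff {i m m' : ℕ} (h₁ : ¬(m = i ∧ m' = i + 1))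
    (h₂ : ¬(m = i + 1 ∧ m' = i)) :
    Equiv.swap i (i + 1) m ≤ Equiv.swap i (i + 1) m' ↔ m ≤ m' := by
  simp only [Equiv.swap_apply_def]
  split_ifs <;> omega

section

variable {n : ℕ} {S : Fin (2 * n) → Fin n} {x : Fin n} {p q : Fin (2 * n)}

theorem occurrences_eq_pair (h : ∀ k, S k = x ↔ k = p ∨ k = q) :
    {m : ℕ | ∃ hm : m < 2 * n, S ⟨m, hm⟩ = x} = {(p : ℕ), (q : ℕ)} := by
  ext m
  simp only [Set.mem_ofPred_eq, Set.mem_insert_iff, Set.mem_singleton_iff]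
  constructor
  · rintro ⟨hm, hSm⟩
    rcases (h _).1 hSm with rfl | rfl <;> simp
  · rintro (rfl | rfl)
    exacts [⟨p.isLt, (h p).2 (Or.inl rfl)⟩, ⟨q.isLt, (h q).2 (Or.inr rfl)⟩]

theorem firstOcc_eq_min (h : ∀ k, S k = x ↔ k = p ∨ k = q) :
    firstOcc S x = min (p : ℕ) q := by
  rw [firstOcc, occurrences_eq_pair h, csInf_pair]

theorem secondOcc_eq_max (h : ∀ k, S k = x ↔ k = p ∨ k = q) :
    secondOcc S x = max (p : ℕ) q := by
  rw [secondOcc, occurrences_eq_pair h, csSup_pair]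

theorem comp_perm_eq_iff (h : ∀ k, S k = x ↔ k = p ∨ k = q) (σ : Equiv.Perm (Fin (2 * n)))
    (k : Fin (2 * n)) : (S ∘ σ) k = x ↔ k = σ.symm p ∨ k = σ.symm q := by
  rw [Function.comp_apply, h, ← Equiv.eq_symm_apply, ← Equiv.eq_symm_apply]

theorem stringGraph_adj (S : Fin (2 * n) → Fin n) (x y : Fin n) :
    (stringGraph S).Adj x y ↔
      x ≠ y ∧ firstOcc S x ≤ secondOcc S y ∧ firstOcc S y ≤ secondOcc S x := by
  simp only [stringGraph, SimpleGraph.fromRel_adj]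
  tauto

theorem stringGraph_eq_of_firstOcc_le_secondOcc_iff {T : Fin (2 * n) → Fin n}
    (h : ∀ x y, firstOcc T x ≤ secondOcc T y ↔ firstOcc S x ≤ secondOcc S y) :
    stringGraph T = stringGraph S := by
  ext x y
  simp only [stringGraph_adj, h]

namespace IsStringRep

theorem exists_occurrences (hS : IsStringRep S) (x : Fin n) :
    ∃ p q : Fin (2 * n), (p : ℕ) < q ∧ ∀ k, S k = x ↔ k = p ∨ k = q := by
  obtain ⟨p, q, hpq, hset⟩ := Finset.card_eq_two.1 (hS x)
  have hocc : ∀ k, S k = x ↔ k = p ∨ k = q := fun k => by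
    simpa using congrArg (k ∈ ·) hset
  rcases hpq.lt_or_gt with hlt | hlt
  · exact ⟨p, q, hlt, hocc⟩
  · exact ⟨q, p, hlt, fun k => (hocc k).trans or_comm⟩

theorem firstOcc_lt_secondOcc (hS : IsStringRep S) (x : Fin n) : firstOcc S x < secondOcc S x := by
  obtain ⟨p, q, hpq, h⟩ := hS.exists_occurrences x
  rw [firstOcc_eq_min h, secondOcc_eq_max h]
  exact lt_max_of_lt_right (min_lt_of_left_lt hpq)

theorem eq_firstOcc_or_eq_secondOcc (hS : IsStringRep S) {k : Fin (2 * n)} (hk : S k = x) :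
    (k : ℕ) = firstOcc S x ∨ (k : ℕ) = secondOcc S x := by
  obtain ⟨p, q, hpq, h⟩ := hS.exists_occurrences x
  rw [firstOcc_eq_min h, secondOcc_eq_max h, min_eq_left hpq.le, max_eq_right hpq.le]
  exact ((h k).1 hk).imp (congrArg Fin.val) (congrArg Fin.val)

theorem firstOcc_ne_secondOcc (hS : IsStringRep S) (x y : Fin n) :
    firstOcc S x ≠ secondOcc S y := by
  obtain ⟨p, q, hpq, hx⟩ := hS.exists_occurrences x
  obtain ⟨p', q', hpq', hy⟩ := hS.exists_occurrences y
  rw [firstOcc_eq_min hx, secondOcc_eq_max hy, min_eq_left hpq.le, max_eq_right hpq'.le]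
  intro hpq''
  have hxy : x = y := ((hx p).2 (Or.inl rfl)).symm.trans (Fin.ext hpq'' ▸ (hy q').2 (Or.inr rfl))
  subst hxy
  rcases (hx p').1 ((hy p').2 (Or.inl rfl)) with h | h <;> have := congrArg Fin.val h <;> omega

theorem occ_comp_swap (hS : IsStringRep S) {i j : Fin (2 * n)} (hj : (j : ℕ) = i + 1)
    (hij : S i ≠ S j) (z : Fin n) :
    firstOcc (S ∘ Equiv.swap i j) z = Equiv.swap (i : ℕ) (i + 1) (firstOcc S z) ∧
      secondOcc (S ∘ Equiv.swap i j) z = Equiv.swap (i : ℕ) (i + 1) (secondOcc S z) := by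
  obtain ⟨p, q, hpq, h⟩ := hS.exists_occurrences z
  have h' := comp_perm_eq_iff h (Equiv.swap i j)
  rw [Equiv.symm_swap] at h'
  have hval (k : Fin (2 * n)) : (Equiv.swap i j k : ℕ) = Equiv.swap (i : ℕ) (i + 1) k := by
    rw [← hj, Fin.val_injective.swap_apply]
  have hpair : ¬((p : ℕ) = i ∧ (q : ℕ) = i + 1) := by
    rintro ⟨hp, hq⟩
    rw [← Fin.ext hp, ← Fin.ext (hq.trans hj.symm), (h p).2 (Or.inl rfl), (h q).2 (Or.inr rfl)] at hij
    exact hij rfl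
  have hle := (Nat.swap_succ_le_swap_succ_iff hpair (by omega)).2 hpq.le
  rw [firstOcc_eq_min h', secondOcc_eq_max h', firstOcc_eq_min h, secondOcc_eq_max h, hval, hval,
    min_eq_left hle, max_eq_right hle, min_eq_left hpq.le, max_eq_right hpq.le]
  exact ⟨rfl, rfl⟩

variable {i j : Fin (2 * n)} {a b : Fin n}

theorem stringGraph_comp_swap_eq_self (hS : IsStringRep S) (hj : (j : ℕ) = i + 1)
    (ha : S i = a) (hb : S j = b) (hab : a ≠ b)
    (h : (firstOcc S a = i ∧ firstOcc S b = i + 1) ∨ (secondOcc S a = i ∧ secondOcc S b = i + 1)) :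
    stringGraph (S ∘ Equiv.swap i j) = stringGraph S := by
  have hij : S i ≠ S j := by rwa [ha, hb]
  refine stringGraph_eq_of_firstOcc_le_secondOcc_iff fun x y => ?_
  rw [(hS.occ_comp_swap hj hij x).1, (hS.occ_comp_swap hj hij y).2]
  have := hS.firstOcc_ne_secondOcc a y
  have := hS.firstOcc_ne_secondOcc b y
  have := hS.firstOcc_ne_secondOcc x a
  have := hS.firstOcc_ne_secondOcc x b
  exact Nat.swap_succ_le_swap_succ_iff (by omega) (by omega)

theorem bothFirst_or_bothSecond_of_stringGraph_comp_swap_eq (hS : IsStringRep S)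
    (hj : (j : ℕ) = i + 1) (ha : S i = a) (hb : S j = b) (hab : a ≠ b)
    (hG : stringGraph (S ∘ Equiv.swap i j) = stringGraph S) :
    (firstOcc S a = i ∧ firstOcc S b = i + 1) ∨ (secondOcc S a = i ∧ secondOcc S b = i + 1) := by
  have hij : S i ≠ S j := by rwa [ha, hb]
  have hocc := hS.occ_comp_swap hj hij
  have hadj := Iff.of_eq (congrArg (·.Adj a b) hG)
  rw [stringGraph_adj, stringGraph_adj, (hocc a).1, (hocc a).2, (hocc b).1, (hocc b).2] at hadj
  have hfsa := hS.firstOcc_lt_secondOcc a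
  have hfsb := hS.firstOcc_lt_secondOcc b
  have hjb := hS.eq_firstOcc_or_eq_secondOcc hb
  rw [hj] at hjb
  rcases hS.eq_firstOcc_or_eq_secondOcc ha with hia | hia <;> rcases hjb with hjb | hjb
  · exact Or.inl ⟨hia.symm, hjb.symm⟩
  · have hadj' := (hadj.2 ⟨hab, by omega, by omega⟩).2.1
    rw [← hia, ← hjb, Equiv.swap_apply_left, Equiv.swap_apply_right] at hadj'
    omega
  · refine absurd (hadj.1 ⟨hab, ?_, ?_⟩).2.2 (by omega)
    · exact (Nat.swap_succ_le_swap_succ_iff (by omega) (by omega)).2 (by omega)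
    · rw [← hia, ← hjb, Equiv.swap_apply_left, Equiv.swap_apply_right]
      omega
  · exact Or.inr ⟨hia.symm, hjb.symm⟩

end IsStringRep

end

theorem stmt1 {n : ℕ} (S1 : Fin (2 * n) → Fin n) (hS1 : IsStringRep S1)
    (i : Fin (2 * n)) (hi : (i : ℕ) + 1 < 2 * n)
    (a b : Fin n) (ha : S1 i = a) (hb : S1 ⟨(i : ℕ) + 1, hi⟩ = b) (hab : a ≠ b)
    (S2 : Fin (2 * n) → Fin n)
    (hS2 : S2 = S1 ∘ Equiv.swap i ⟨(i : ℕ) + 1, hi⟩) :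
    stringGraph S2 = stringGraph S1 ↔
      ((firstOcc S1 a = (i : ℕ) ∧ firstOcc S1 b = (i : ℕ) + 1) ∨
       (secondOcc S1 a = (i : ℕ) ∧ secondOcc S1 b = (i : ℕ) + 1)) := by
  subst hS2
  exact ⟨hS1.bothFirst_or_bothSecond_of_stringGraph_comp_swap_eq rfl ha hb hab,
    hS1.stringGraph_comp_swap_eq_self rfl ha hb hab⟩
end

section
/- Let S be a string representation of length 2n. Swapping two adjacent entries of S, where the left one is the second (right) endpoint of a and the right one is the first (left) endpoint of b, a ≠ b, yields a string representation of the graph G + (a,b), i.e., exactly the edge (a,b) is added and no other adjacency changes. -/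
/-! Swapping positions `i` and `i + 1` moves every occurrence by the transposition
`σ = (i i+1)` of `ℕ`. Since `S i ≠ S (i + 1)`, no letter occupies both positions, so `σ` is
monotone on each occurrence set and therefore carries both endpoints of every interval along:
the new interval of `x` is `[σ (first x), σ (second x)]`. The comparison `σ u ≤ σ v` agrees with
`u ≤ v` except at `(u, v) = (i + 1, i)`, which for a left and a right endpoint is exactly the
pair `(first b, second a)`; so the only adjacency that changes is the new edge `ab`. -/

open Equiv

lemma swap_succ_le_swap_succ_iff {k u v : ℕ} (hv : v ≠ k + 1) :
    swap k (k + 1) u ≤ swap k (k + 1) v ↔ u ≤ v ∨ (u = k + 1 ∧ v = k) := by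
  simp only [swap_apply_def]
  split_ifs <;> omega

lemma monotoneOn_swap_succ {k : ℕ} {A : Set ℕ} (hA : ¬(k ∈ A ∧ k + 1 ∈ A)) :
    MonotoneOn (swap k (k + 1)) A := by
  intro u hu v hv huv
  simp only [swap_apply_def]
  split_ifs <;> subst_vars <;> first | omega | exact absurd ⟨hu, hv⟩ hA

section Occurrences

variable {m : ℕ} {α : Type*} (S : Fin m → α)

def occSet (x : α) : Set ℕ := Fin.val '' {j | S j = x}

lemma occSet_eq (x : α) : occSet S x = {k | ∃ h : k < m, S ⟨k, h⟩ = x} := by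
  ext k
  constructor
  · rintro ⟨j, hj, rfl⟩
    exact ⟨j.2, hj⟩
  · rintro ⟨h, hk⟩
    exact ⟨⟨k, h⟩, hk, rfl⟩

lemma eq_of_mem_occSet {k : ℕ} {x y : α} (hx : k ∈ occSet S x) (hy : k ∈ occSet S y) :
    x = y := by
  obtain ⟨j, rfl, rfl⟩ := hx
  obtain ⟨j', rfl, hj'⟩ := hy
  rw [Fin.ext hj']

lemma occSet_comp_swap [DecidableEq α] (i j : Fin m) (x : α) :
    occSet (S ∘ swap i j) x = swap (i : ℕ) j '' occSet S x := by
  have hpre : {k | (S ∘ swap i j) k = x} = swap i j '' {k | S k = x} := by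
    rw [image_eq_preimage_symm, symm_swap]; rfl
  rw [occSet, occSet, hpre, Set.image_image, Set.image_image]
  simp only [Fin.val_injective.map_swap]

end Occurrences

section StringRep

variable {n : ℕ} {S : Fin (2 * n) → Fin n}

lemma firstOcc_eq_sInf_occSet (x : Fin n) : firstOcc S x = sInf (occSet S x) := by
  rw [firstOcc, occSet_eq]

lemma secondOcc_eq_sSup_occSet (x : Fin n) : secondOcc S x = sSup (occSet S x) := by
  rw [secondOcc, occSet_eq]

lemma IsStringRep.comp_perm (hS : IsStringRep S) (e : Perm (Fin (2 * n))) :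
    IsStringRep (S ∘ e) := fun x =>
  (Finset.card_equiv e fun j => by simp).trans (hS x)

lemma IsStringRep.exists_ne (hS : IsStringRep S) (x : Fin n) :
    ∃ j k, S j = x ∧ S k = x ∧ j ≠ k := by
  obtain ⟨j, hj, k, hk, hjk⟩ := Finset.one_lt_card.mp (by rw [hS x]; norm_num)
  exact ⟨j, k, (Finset.mem_filter.mp hj).2, (Finset.mem_filter.mp hk).2, hjk⟩

lemma IsStringRep.isLeast_firstOcc (hS : IsStringRep S) (x : Fin n) :
    IsLeast (occSet S x) (firstOcc S x) := by
  obtain ⟨j, -, hj, -⟩ := hS.exists_ne x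
  rw [firstOcc_eq_sInf_occSet]
  exact ⟨Nat.sInf_mem ⟨j, j, hj, rfl⟩, fun _ => Nat.sInf_le⟩

lemma IsStringRep.isGreatest_secondOcc (hS : IsStringRep S) (x : Fin n) :
    IsGreatest (occSet S x) (secondOcc S x) := by
  obtain ⟨j, -, hj, -⟩ := hS.exists_ne x
  have hbdd : BddAbove (occSet S x) := ((Set.toFinite _).image _).bddAbove
  rw [secondOcc_eq_sSup_occSet]
  exact ⟨Nat.sSup_mem ⟨j, j, hj, rfl⟩ hbdd, fun _ hk => le_csSup hbdd hk⟩

lemma IsStringRep.firstOcc_lt_secondOcc_s2 (hS : IsStringRep S) (x : Fin n) :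
    firstOcc S x < secondOcc S x := by
  obtain ⟨j, k, hj, hk, hjk⟩ := hS.exists_ne x
  have hjm : (j : ℕ) ∈ occSet S x := ⟨j, hj, rfl⟩
  have hkm : (k : ℕ) ∈ occSet S x := ⟨k, hk, rfl⟩
  have := (hS.isLeast_firstOcc x).2 hjm
  have := (hS.isLeast_firstOcc x).2 hkm
  have := (hS.isGreatest_secondOcc x).2 hjm
  have := (hS.isGreatest_secondOcc x).2 hkm
  have := Fin.val_ne_of_ne hjk
  omega

variable (i : Fin (2 * n)) (hi : (i : ℕ) + 1 < 2 * n) (hne : S i ≠ S ⟨i + 1, hi⟩)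
include hne

lemma monotoneOn_swap_succ_occSet (x : Fin n) :
    MonotoneOn (swap (i : ℕ) (i + 1)) (occSet S x) :=
  monotoneOn_swap_succ fun ⟨hi₀, hi₁⟩ =>
    hne <| (eq_of_mem_occSet S hi₀ ⟨i, rfl, rfl⟩).symm.trans
      (eq_of_mem_occSet S hi₁ ⟨⟨i + 1, hi⟩, rfl, rfl⟩)

lemma firstOcc_comp_swap_succ (hS : IsStringRep S) (x : Fin n) :
    firstOcc (S ∘ swap i ⟨i + 1, hi⟩) x = swap (i : ℕ) (i + 1) (firstOcc S x) := by
  rw [firstOcc_eq_sInf_occSet, occSet_comp_swap]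
  exact ((monotoneOn_swap_succ_occSet i hi hne x).map_isLeast
    (hS.isLeast_firstOcc x)).csInf_eq

lemma secondOcc_comp_swap_succ (hS : IsStringRep S) (x : Fin n) :
    secondOcc (S ∘ swap i ⟨i + 1, hi⟩) x = swap (i : ℕ) (i + 1) (secondOcc S x) := by
  rw [secondOcc_eq_sSup_occSet, occSet_comp_swap]
  exact ((monotoneOn_swap_succ_occSet i hi hne x).map_isGreatest
    (hS.isGreatest_secondOcc x)).csSup_eq

end StringRep

lemma stringGraph_adj_iff {n : ℕ} {S : Fin (2 * n) → Fin n} {x y : Fin n} :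
    (stringGraph S).Adj x y ↔
      x ≠ y ∧ firstOcc S x ≤ secondOcc S y ∧ firstOcc S y ≤ secondOcc S x := by
  rw [stringGraph, SimpleGraph.fromRel_adj]
  tauto

theorem stmt2 {n : ℕ} (S : Fin (2 * n) → Fin n) (hS : IsStringRep S)
    (i : Fin (2 * n)) (hi : (i : ℕ) + 1 < 2 * n)
    (a b : Fin n) (ha : S i = a) (hb : S ⟨(i : ℕ) + 1, hi⟩ = b) (hab : a ≠ b)
    (hra : secondOcc S a = (i : ℕ)) (hlb : firstOcc S b = (i : ℕ) + 1) :
    IsStringRep (S ∘ Equiv.swap i ⟨(i : ℕ) + 1, hi⟩) ∧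
    stringGraph (S ∘ Equiv.swap i ⟨(i : ℕ) + 1, hi⟩) =
      stringGraph S ⊔ SimpleGraph.fromEdgeSet {s(a, b)} := by
  have hne : S i ≠ S ⟨i + 1, hi⟩ := by rw [ha, hb]; exact hab
  have hmem_a : (i : ℕ) ∈ occSet S a := hra ▸ (hS.isGreatest_secondOcc a).1
  have hmem_b : (i : ℕ) + 1 ∈ occSet S b := hlb ▸ (hS.isLeast_firstOcc b).1
  have hfirst (x : Fin n) : firstOcc S x = i + 1 ↔ x = b :=
    ⟨fun h => eq_of_mem_occSet S (h ▸ (hS.isLeast_firstOcc x).1) hmem_b, fun h => h ▸ hlb⟩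
  have hsecond (y : Fin n) : secondOcc S y = i ↔ y = a :=
    ⟨fun h => eq_of_mem_occSet S (h ▸ (hS.isGreatest_secondOcc y).1) hmem_a, fun h => h ▸ hra⟩
  have hfa := hS.firstOcc_lt_secondOcc_s2 a
  have hsb := hS.firstOcc_lt_secondOcc_s2 b
  have hsecond_ne (y : Fin n) : secondOcc S y ≠ i + 1 := fun h => by
    rw [eq_of_mem_occSet S (h ▸ (hS.isGreatest_secondOcc y).1 : (i : ℕ) + 1 ∈ occSet S y)
      hmem_b] at h
    omega
  have hle (x y : Fin n) :
      swap (i : ℕ) (i + 1) (firstOcc S x) ≤ swap (i : ℕ) (i + 1) (secondOcc S y) ↔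
        firstOcc S x ≤ secondOcc S y ∨ (x = b ∧ y = a) := by
    rw [swap_succ_le_swap_succ_iff (hsecond_ne y), hfirst, hsecond]
  refine ⟨hS.comp_perm _, ?_⟩
  ext x y
  rw [SimpleGraph.sup_adj, stringGraph_adj_iff, stringGraph_adj_iff,
    firstOcc_comp_swap_succ i hi hne hS, firstOcc_comp_swap_succ i hi hne hS,
    secondOcc_comp_swap_succ i hi hne hS, secondOcc_comp_swap_succ i hi hne hS, hle, hle,
    SimpleGraph.fromEdgeSet_adj, Set.mem_singleton_iff, Sym2.eq_iff]
  grind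
end

section
/- If G is an interval graph on n vertices that is not a complete graph, then there exists a non-edge e of G such that G + e is also an interval graph. -/
/-!
Represent `G` by intervals `[l v, r v]`. Since `G` is not complete, some interval lies entirely
to the left of another; among all such pairs pick `x, y` for which the gap `l y - r x` is
smallest. Stretching `[l x, r x]` to the right and `[l y, r y]` to the left until both reach a common
point `m` strictly inside this gap makes `x` and `y` meet, and by minimality of the gap no other
pair of intervals comes to meet.
-/

/-- A simple graph is an interval graph if its vertices can be assigned closed
real intervals such that two distinct vertices are adjacent iff their
intervals intersect. -/
def IsIntervalGraph {V : Type*} (G : SimpleGraph V) : Prop :=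
  ∃ l r : V → ℝ, (∀ v, l v ≤ r v) ∧
    ∀ u v : V, u ≠ v →
      (G.Adj u v ↔ (Set.Icc (l u) (r u) ∩ Set.Icc (l v) (r v)).Nonempty)

open SimpleGraph Function

section IntervalRepresentation

variable {V : Type*}

theorem Set.Icc_inter_Icc_nonempty_iff {α : Type*} [Lattice α] {a b c d : α}
    (hab : a ≤ b) (hcd : c ≤ d) :
    (Set.Icc a b ∩ Set.Icc c d).Nonempty ↔ a ≤ d ∧ c ≤ b := by
  rw [Set.Icc_inter_Icc, Set.nonempty_Icc, sup_le_iff, le_inf_iff, le_inf_iff]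
  tauto

def intervalGraphOf (l r : V → ℝ) : SimpleGraph V where
  Adj u v := u ≠ v ∧ l u ≤ r v ∧ l v ≤ r u
  symm := ⟨fun _ _ h ↦ ⟨h.1.symm, h.2.2, h.2.1⟩⟩
  loopless := ⟨fun _ h ↦ h.1 rfl⟩

theorem isIntervalGraph_iff {G : SimpleGraph V} :
    IsIntervalGraph G ↔ ∃ l r : V → ℝ, (∀ v, l v ≤ r v) ∧ G = intervalGraphOf l r := by
  refine exists₂_congr fun l r ↦ and_congr_right fun hlr ↦ ?_
  have hIcc (u v : V) (huv : u ≠ v) :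
      (Set.Icc (l u) (r u) ∩ Set.Icc (l v) (r v)).Nonempty ↔ (intervalGraphOf l r).Adj u v := by
    simp [intervalGraphOf, huv, Set.Icc_inter_Icc_nonempty_iff (hlr u) (hlr v)]
  constructor
  · intro h
    ext u v
    by_cases huv : u = v
    · simp [huv]
    · rw [h u v huv, hIcc u v huv]
  · rintro rfl u v huv
    exact (hIcc u v huv).symm

theorem exists_lt_of_intervalGraphOf_ne_top {l r : V → ℝ} (h : intervalGraphOf l r ≠ ⊤) :
    ∃ u v, r u < l v := by
  contrapose! h
  ext u v
  simp [intervalGraphOf, h]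

theorem exists_min_gap [Finite V] {l r : V → ℝ} (h : ∃ u v, r u < l v) :
    ∃ x y, r x < l y ∧ ∀ u v, r u < l v → l y - r x ≤ l v - r u := by
  obtain ⟨u, v, huv⟩ := h
  obtain ⟨⟨x, y⟩, hxy, hmin⟩ := Set.exists_min_image {p : V × V | r p.1 < l p.2}
    (fun p ↦ l p.2 - r p.1) (Set.toFinite _) ⟨(u, v), huv⟩
  exact ⟨x, y, hxy, fun u v huv ↦ hmin (u, v) huv⟩

section MinGap

variable [DecidableEq V] {l r : V → ℝ} {x y : V} {m : ℝ}

theorem update_lt_update_iff_of_min_gap (hxm : r x < m) (hmy : m < l y)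
    (hmin : ∀ u v, r u < l v → l y - r x ≤ l v - r u) (u v : V) :
    update r x m u < update l y m v ↔ r u < l v ∧ ¬(u = x ∧ v = y) := by
  constructor
  · intro h
    refine ⟨?_, ?_⟩
    · calc r u ≤ update r x m u := le_update_self_iff.2 hxm.le u
        _ < update l y m v := h
        _ ≤ l v := update_le_self_iff.2 hmy.le v
    · rintro ⟨rfl, rfl⟩
      simp at h
  · rintro ⟨h, hne⟩
    have hgap := hmin u v h
    rcases eq_or_ne u x with rfl | hux
    · have hvy : v ≠ y := fun hvy ↦ hne ⟨rfl, hvy⟩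
      rw [update_self, update_of_ne hvy]
      linarith
    rcases eq_or_ne v y with rfl | hvy
    · rw [update_self, update_of_ne hux]
      linarith
    rwa [update_of_ne hux, update_of_ne hvy]

theorem intervalGraphOf_update_of_min_gap (hlr : ∀ v, l v ≤ r v) (hxm : r x < m)
    (hmy : m < l y) (hmin : ∀ u v, r u < l v → l y - r x ≤ l v - r u) :
    intervalGraphOf (update l y m) (update r x m) =
      intervalGraphOf l r ⊔ fromEdgeSet {s(x, y)} := by
  have hyx : ¬r y < l x := fun h ↦ ((hlr y).trans_lt h).not_ge ((hlr x).trans (hxm.trans hmy).le)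
  ext u v
  simp only [intervalGraphOf, sup_adj, fromEdgeSet_adj, Set.mem_singleton_iff, Sym2.eq_iff,
    ← not_lt, update_lt_update_iff_of_min_gap hxm hmy hmin]
  by_cases h₁ : u = x ∧ v = y
  · obtain ⟨rfl, rfl⟩ := h₁
    tauto
  by_cases h₂ : u = y ∧ v = x
  · obtain ⟨rfl, rfl⟩ := h₂
    tauto
  tauto

end MinGap

end IntervalRepresentation

theorem stmt6 {V : Type*} [Fintype V] (G : SimpleGraph V)
    (hG : IsIntervalGraph G) (hnc : G ≠ ⊤) :
    ∃ x y : V, x ≠ y ∧ ¬ G.Adj x y ∧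
      IsIntervalGraph (G ⊔ SimpleGraph.fromEdgeSet {s(x, y)}) := by
  classical
  obtain ⟨l, r, hlr, rfl⟩ := isIntervalGraph_iff.1 hG
  obtain ⟨x, y, hxy, hmin⟩ := exists_min_gap (exists_lt_of_intervalGraphOf_ne_top hnc)
  obtain ⟨m, hxm, hmy⟩ := exists_between hxy
  refine ⟨x, y, by rintro rfl; exact hxy.not_ge (hlr x), fun h ↦ h.2.2.not_gt hxy, ?_⟩
  refine isIntervalGraph_iff.2 ⟨update l y m, update r x m, fun v ↦ ?_,
    (intervalGraphOf_update_of_min_gap hlr hxm hmy hmin).symm⟩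
  calc update l y m v ≤ l v := update_le_self_iff.2 hmy.le v
    _ ≤ r v := hlr v
    _ ≤ update r x m v := le_update_self_iff.2 hxm.le v
end

section
/- If a graph G contains an asteroidal triple, then G is not an interval graph. -/
/-- An asteroidal triple: three pairwise non-adjacent vertices such that
between every two of them there is a path avoiding the closed neighborhood of
the third. -/
def IsAsteroidalTriple {V : Type*} (G : SimpleGraph V) (a b c : V) : Prop :=
  a ≠ b ∧ a ≠ c ∧ b ≠ c ∧ ¬ G.Adj a b ∧ ¬ G.Adj a c ∧ ¬ G.Adj b c ∧
  (∃ p : G.Walk a b, ∀ v ∈ p.support, v ≠ c ∧ ¬ G.Adj c v) ∧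
  (∃ p : G.Walk a c, ∀ v ∈ p.support, v ≠ b ∧ ¬ G.Adj b v) ∧
  (∃ p : G.Walk b c, ∀ v ∈ p.support, v ≠ a ∧ ¬ G.Adj a v)


/-! A walk avoiding the closed neighbourhood of `m` never jumps over the interval of `m`: an edge
from an interval left of `m` to one that is not would give an interval containing the left
endpoint of `m`. So the whole walk stays on one side of `m`. The three intervals of an asteroidal
triple are pairwise disjoint, so one lies between the other two, and the walk joining the outer
two while avoiding the neighbourhood of the middle one cannot exist. -/

namespace SimpleGraph

variable {V : Type*} {G : SimpleGraph V}

structure IsIntervalModel (G : SimpleGraph V) (l r : V → ℝ) : Prop where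
  le : ∀ v, l v ≤ r v
  adj_iff : ∀ u v, u ≠ v →
    (G.Adj u v ↔ (Set.Icc (l u) (r u) ∩ Set.Icc (l v) (r v)).Nonempty)

namespace IsIntervalModel

variable {l r : V → ℝ}

lemma eq_or_adj_of_mem (hM : G.IsIntervalModel l r) {u v : V} {x : ℝ}
    (hu : x ∈ Set.Icc (l u) (r u)) (hv : x ∈ Set.Icc (l v) (r v)) : u = v ∨ G.Adj u v :=
  or_iff_not_imp_left.2 fun hne => (hM.adj_iff u v hne).2 ⟨x, hu, hv⟩

lemma left_le_right_of_adj (hM : G.IsIntervalModel l r) {u v : V} (h : G.Adj u v) :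
    l v ≤ r u := by
  obtain ⟨x, hu, hv⟩ := (hM.adj_iff u v h.ne).1 h
  exact hv.1.trans hu.2

lemma lt_or_lt_of_not_adj (hM : G.IsIntervalModel l r) {u v : V} (hne : u ≠ v)
    (h : ¬ G.Adj u v) : r u < l v ∨ r v < l u := by
  by_contra! hle
  refine (hM.eq_or_adj_of_mem (x := max (l u) (l v)) ?_ ?_).elim hne h
  · exact ⟨le_max_left _ _, max_le (hM.le u) hle.1⟩
  · exact ⟨le_max_right _ _, max_le hle.2 (hM.le v)⟩

lemma right_lt_left_of_walk (hM : G.IsIntervalModel l r) {x y m : V} (p : G.Walk x y)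
    (hp : ∀ v ∈ p.support, v ≠ m ∧ ¬ G.Adj m v) (hx : r x < l m) : r y < l m := by
  by_contra hy
  obtain ⟨d, hd, hfst, hsnd⟩ := p.exists_boundary_dart {v | r v < l m} hx hy
  have hmem : l m ∈ Set.Icc (l d.snd) (r d.snd) :=
    ⟨(hM.left_le_right_of_adj d.adj).trans hfst.le, not_lt.1 hsnd⟩
  obtain ⟨hne, hnadj⟩ := hp d.snd (p.dart_snd_mem_support_of_mem_darts hd)
  exact (hM.eq_or_adj_of_mem ⟨le_rfl, hM.le m⟩ hmem).elim (fun h => hne h.symm) hnadj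

lemma right_lt_left_iff_of_walk (hM : G.IsIntervalModel l r) {x y m : V} (p : G.Walk x y)
    (hp : ∀ v ∈ p.support, v ≠ m ∧ ¬ G.Adj m v) : r x < l m ↔ r y < l m :=
  ⟨hM.right_lt_left_of_walk p hp,
    hM.right_lt_left_of_walk p.reverse fun v hv => hp v (by simpa using hv)⟩

end IsIntervalModel

end SimpleGraph

theorem stmt11 {V : Type*} (G : SimpleGraph V) (a b c : V)
    (h : IsAsteroidalTriple G a b c) : ¬ IsIntervalGraph G := by
  rintro ⟨l, r, hle, hadj⟩
  have hM : G.IsIntervalModel l r := ⟨hle, hadj⟩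
  obtain ⟨hab, hac, hbc, nab, nac, nbc, ⟨pab, hpab⟩, ⟨pac, hpac⟩, ⟨pbc, hpbc⟩⟩ := h
  have side_c := hM.right_lt_left_iff_of_walk pab hpab
  have side_b := hM.right_lt_left_iff_of_walk pac hpac
  have side_a := hM.right_lt_left_iff_of_walk pbc hpbc
  have := hle a; have := hle b; have := hle c
  have := hM.lt_or_lt_of_not_adj hab nab
  have := hM.lt_or_lt_of_not_adj hac nac
  have := hM.lt_or_lt_of_not_adj hbc nbc
  grind
end
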